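/- Let (X,d) be a separable metric space, let λ be a locally finite Borel regular measure over X of Vitali type with respect to d, let μ be a locally finite Borel regular measure over X, and let 0 < c < ∞. If the lower derivative satisfies D̲(μ,λ,x) < c for every x in a set A ⊂ X, then μ_λ(A) ≤ c·λ(A); and if the upper derivative satisfies D̄(μ,λ,x) > c for every x ∈ A, then μ_λ(A) ≥ c·λ(A). -/

import Mathlib

open MeasureTheory Metric Filter Set
open scoped ENNReal Topology NNReal

/-- `μ_λ(A) := inf { μ(C) : C Borel, λ(A \ C) = 0 }`. -/
noncomputable def relPart {X : Type*} [MeasurableSpace X]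
    (μ lam : Measure X) (A : Set X) : ℝ≥0∞ :=
  ⨅ (C : Set X) (_ : MeasurableSet C) (_ : lam (A \ C) = 0), μ C

/-- A measure `lam` is of Vitali type with respect to the distance: for every set `A`
and every family `ℬ` of (closed) balls, recorded as pairs (center, radius), such that every
point of `A` is the center of balls of `ℬ` of arbitrarily small radius, there is a countable
disjointed subfamily covering `lam`-almost all of `A`. -/
def IsVitaliType {X : Type*} [MetricSpace X] [MeasurableSpace X] (lam : Measure X) : Prop :=
  ∀ (A : Set X) (ℬ : Set (X × ℝ)),
    (∀ p ∈ ℬ, 0 < p.2) →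
    (∀ x ∈ A, ∀ ε > 0, ∃ r : ℝ, 0 < r ∧ r < ε ∧ (x, r) ∈ ℬ) →
    ∃ F ⊆ ℬ, F.Countable ∧
      (F.PairwiseDisjoint fun p => closedBall p.1 p.2) ∧
      lam (A \ ⋃ p ∈ F, closedBall p.1 p.2) = 0

/-- Lower derivative `D̲(μ,λ,x) = liminf_{r→0⁺} μ(B(x,r))/λ(B(x,r))`
(in `ℝ≥0∞`, with the convention `0/0 = 0`). -/
noncomputable def lowerDeriv {X : Type*} [MetricSpace X] [MeasurableSpace X]
    (μ lam : Measure X) (x : X) : ℝ≥0∞ :=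
  Filter.liminf (fun r : ℝ => μ (closedBall x r) / lam (closedBall x r)) (𝓝[>] (0:ℝ))

/-- Upper derivative `D̄(μ,λ,x) = limsup_{r→0⁺} μ(B(x,r))/λ(B(x,r))`
(in `ℝ≥0∞`, with the convention `0/0 = 0`). -/
noncomputable def upperDeriv {X : Type*} [MetricSpace X] [MeasurableSpace X]
    (μ lam : Measure X) (x : X) : ℝ≥0∞ :=
  Filter.limsup (fun r : ℝ => μ (closedBall x r) / lam (closedBall x r)) (𝓝[>] (0:ℝ))


/-! Cover `λ`-almost all of `A` by countably many disjoint closed balls inside an open set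
`U ⊇ A`, on each of which `μ` and `c • λ` compare as the derivative bound dictates; summing over
the balls compares `μ` and `c • λ` on their union, and outer regularity lets `U` shrink to `A`.
For the lower bound on `μ_λ(A)` this is applied to `A ∩ C` for each admissible Borel set `C`. -/

namespace ENNReal

theorem le_mul_of_div_lt {a b c : ℝ≥0∞} (h : a / b < c) : a ≤ c * b := by
  rcases eq_or_ne b 0 with rfl | hb
  · rcases eq_or_ne a 0 with rfl | ha
    · exact zero_le
    · simp [ENNReal.div_zero ha] at h
  · exact (ENNReal.div_le_iff_le_mul (.inl hb) (.inr (pos_of_gt h).ne')).1 h.le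

theorem mul_le_of_lt_div {a b c : ℝ≥0∞} (h : c < a / b) : c * b ≤ a := by
  rcases eq_or_ne b ∞ with rfl | hb
  · simp at h
  · rcases eq_or_ne b 0 with rfl | hb0
    · simp
    · exact (ENNReal.le_div_iff_mul_le (.inl hb0) (.inl hb)).1 h.le

end ENNReal

namespace MeasureTheory

theorem Measure.le_of_forall_isOpen_le {α : Type*} [MeasurableSpace α] [TopologicalSpace α]
    {μ : Measure α} [μ.OuterRegular] {a : ℝ≥0∞} {s : Set α}
    (h : ∀ U, IsOpen U → s ⊆ U → a ≤ μ U) : a ≤ μ s := by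
  rw [s.measure_eq_iInf_isOpen μ]
  exact le_iInf₂ fun U hsU => le_iInf fun hU => h U hU hsU

theorem measure_biUnion_le_of_forall_le {α ι : Type*} [MeasurableSpace α]
    {μ ν : Measure α} {s : ι → Set α} {F : Set ι} (hF : F.Countable)
    (hd : F.PairwiseDisjoint s) (hs : ∀ i ∈ F, MeasurableSet (s i))
    (h : ∀ i ∈ F, μ (s i) ≤ ν (s i)) :
    μ (⋃ i ∈ F, s i) ≤ ν (⋃ i ∈ F, s i) := by
  rw [measure_biUnion hF hd hs, measure_biUnion hF hd hs]
  exact ENNReal.tsum_le_tsum fun i => h i i.2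

end MeasureTheory

section relPart

variable {X : Type*} [MeasurableSpace X] {μ lam : Measure X} {A C : Set X}

theorem relPart_le (hC : MeasurableSet C) (hAC : lam (A \ C) = 0) : relPart μ lam A ≤ μ C :=
  iInf₂_le_of_le C hC (iInf_le _ hAC)

theorem le_relPart {a : ℝ≥0∞} (h : ∀ C, MeasurableSet C → lam (A \ C) = 0 → a ≤ μ C) :
    a ≤ relPart μ lam A :=
  le_iInf₂ fun C hC => le_iInf (h C hC)

end relPart

section Vitali

variable {X : Type*} [MetricSpace X] [MeasurableSpace X] {μ lam : Measure X} {A : Set X}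

theorem IsVitaliType.exists_disjoint_closedBalls (hVit : IsVitaliType lam)
    {U : Set X} (hU : IsOpen U) (hAU : A ⊆ U) (P : X → ℝ → Prop)
    (hP : ∀ x ∈ A, ∃ᶠ r in 𝓝[>] 0, P x r) :
    ∃ F : Set (X × ℝ), F.Countable ∧ F.PairwiseDisjoint (fun p => closedBall p.1 p.2) ∧
      (∀ p ∈ F, closedBall p.1 p.2 ⊆ U ∧ P p.1 p.2) ∧
      lam (A \ ⋃ p ∈ F, closedBall p.1 p.2) = 0 := by
  set ℬ : Set (X × ℝ) := {p | 0 < p.2 ∧ closedBall p.1 p.2 ⊆ U ∧ P p.1 p.2}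
  have hsmall : ∀ x ∈ A, ∀ ε > 0, ∃ r : ℝ, 0 < r ∧ r < ε ∧ (x, r) ∈ ℬ := by
    intro x hx ε hε
    obtain ⟨δ, hδ, hδU⟩ := nhds_basis_closedBall.mem_iff.1 (hU.mem_nhds (hAU hx))
    obtain ⟨r, hPr, hr0, hr⟩ :=
      ((hP x hx).and_eventually (Ioo_mem_nhdsGT (lt_min hε hδ))).exists
    exact ⟨r, hr0, hr.trans_le (min_le_left _ _), hr0,
      (closedBall_subset_closedBall (hr.le.trans (min_le_right _ _))).trans hδU, hPr⟩
  obtain ⟨F, hFℬ, hF, hd, hcov⟩ := hVit A ℬ (fun p hp => hp.1) hsmall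
  exact ⟨F, hF, hd, fun p hp => (hFℬ hp).2, hcov⟩

variable [BorelSpace X]

theorem relPart_le_mul_of_lowerDeriv_lt [lam.OuterRegular] (hVit : IsVitaliType lam)
    {c : ℝ≥0∞} (hc : c ≠ ∞) (h : ∀ x ∈ A, lowerDeriv μ lam x < c) :
    relPart μ lam A ≤ c * lam A := by
  have := Measure.OuterRegular.smul lam hc
  show relPart μ lam A ≤ (c • lam) A
  refine Measure.le_of_forall_isOpen_le fun U hU hAU => ?_
  obtain ⟨F, hF, hd, hFU, hcov⟩ := hVit.exists_disjoint_closedBalls hU hAU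
    (fun x r => μ (closedBall x r) / lam (closedBall x r) < c)
    (fun x hx => frequently_lt_of_liminf_lt (by isBoundedDefault) (h x hx))
  have hmeas : ∀ p ∈ F, MeasurableSet (closedBall p.1 p.2) := fun _ _ => measurableSet_closedBall
  calc relPart μ lam A ≤ μ (⋃ p ∈ F, closedBall p.1 p.2) :=
        relPart_le (.biUnion hF hmeas) hcov
    _ ≤ (c • lam) (⋃ p ∈ F, closedBall p.1 p.2) :=
        measure_biUnion_le_of_forall_le hF hd hmeas fun p hp =>
          ENNReal.le_mul_of_div_lt (hFU p hp).2
    _ ≤ (c • lam) U := measure_mono (iUnion₂_subset fun p hp => (hFU p hp).1)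

theorem mul_le_of_lt_upperDeriv [μ.OuterRegular] (hVit : IsVitaliType lam) {c : ℝ≥0∞}
    (h : ∀ x ∈ A, c < upperDeriv μ lam x) : c * lam A ≤ μ A := by
  refine Measure.le_of_forall_isOpen_le fun U hU hAU => ?_
  obtain ⟨F, hF, hd, hFU, hcov⟩ := hVit.exists_disjoint_closedBalls hU hAU
    (fun x r => c < μ (closedBall x r) / lam (closedBall x r))
    (fun x hx => frequently_lt_of_lt_limsup (by isBoundedDefault) (h x hx))
  have hmeas : ∀ p ∈ F, MeasurableSet (closedBall p.1 p.2) := fun _ _ => measurableSet_closedBall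
  calc c * lam A ≤ (c • lam) (⋃ p ∈ F, closedBall p.1 p.2) :=
        mul_le_mul_right (measure_mono_ae (ae_le_set.2 hcov)) c
    _ ≤ μ (⋃ p ∈ F, closedBall p.1 p.2) :=
        measure_biUnion_le_of_forall_le hF hd hmeas fun p hp =>
          ENNReal.mul_le_of_lt_div (hFU p hp).2
    _ ≤ μ U := measure_mono (iUnion₂_subset fun p hp => (hFU p hp).1)

end Vitali

theorem stmt2_general {X : Type*} [MetricSpace X] [TopologicalSpace.SeparableSpace X]
    [MeasurableSpace X] [BorelSpace X]
    (lam μ : Measure X) [IsLocallyFiniteMeasure lam] [IsLocallyFiniteMeasure μ]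
    (hVit : IsVitaliType lam)
    (c : ℝ≥0∞) (hc : c < ∞) (A : Set X) :
    ((∀ x ∈ A, lowerDeriv μ lam x < c) → relPart μ lam A ≤ c * lam A) ∧
    ((∀ x ∈ A, c < upperDeriv μ lam x) → c * lam A ≤ relPart μ lam A) := by
  refine ⟨relPart_le_mul_of_lowerDeriv_lt hVit hc.ne, fun h => le_relPart fun C _ hAC => ?_⟩
  calc c * lam A ≤ c * lam (A ∩ C) :=
        mul_le_mul_right (measure_mono_ae (ae_le_set.2 (by rwa [sdiff_self_inter]))) c
    _ ≤ μ (A ∩ C) := mul_le_of_lt_upperDeriv hVit fun x hx => h x hx.1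
    _ ≤ μ C := measure_mono inter_subset_right

theorem stmt2 {X : Type*} [MetricSpace X] [TopologicalSpace.SeparableSpace X]
    [MeasurableSpace X] [BorelSpace X]
    (lam μ : Measure X) [IsLocallyFiniteMeasure lam] [IsLocallyFiniteMeasure μ]
    (hVit : IsVitaliType lam)
    (c : ℝ≥0∞) (hc0 : 0 < c) (hc : c < ∞) (A : Set X) :
    ((∀ x ∈ A, lowerDeriv μ lam x < c) → relPart μ lam A ≤ c * lam A) ∧
    ((∀ x ∈ A, c < upperDeriv μ lam x) → c * lam A ≤ relPart μ lam A) :=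
  stmt2_general lam μ hVit c hc A
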